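/- Let M = (S, A, AP, L, I) be an interval Markov decision process and let s, t ∈ S with s ∼∀ t. Then for every PCTL state formula φ, s ⊨∃ φ if and only if t ⊨∃ φ. -/

import Mathlib

open scoped Classical
open MeasureTheory

structure IMDP (S A AP : Type) [Fintype S] [Fintype A] : Type where
  L : S → Set AP
  Il : S → A → S → ℝ
  Iu : S → A → S → ℝ
  Il_nonneg : ∀ s a s', 0 ≤ Il s a s'
  Il_le_Iu : ∀ s a s', Il s a s' ≤ Iu s a s'
  Iu_le_one : ∀ s a s', Iu s a s' ≤ 1
  feasible_nonempty : ∀ s a, ∃ μ : S → ℝ,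
    (∀ s', 0 ≤ μ s') ∧ (∑ s', μ s') = 1 ∧
      ∀ s', μ s' ∈ Set.Icc (Il s a s') (Iu s a s')

def IsDist {X : Type} [Fintype X] (μ : X → ℝ) : Prop :=
  (∀ x, 0 ≤ μ x) ∧ (∑ x, μ x) = 1

def Feasible {S A AP : Type} [Fintype S] [Fintype A] (M : IMDP S A AP)
    (s : S) (a : A) (μ : S → ℝ) : Prop :=
  IsDist μ ∧ ∀ s', μ s' ∈ Set.Icc (M.Il s a s') (M.Iu s a s')

noncomputable def classMass {S : Type} [Fintype S] (R : S → S → Prop)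
    (μ : S → ℝ) (c : S) : ℝ :=
  ∑ s', if R c s' then μ s' else 0

def StepTo {S A AP : Type} [Fintype S] [Fintype A] (M : IMDP S A AP)
    (s : S) (μ : S → ℝ) : Prop :=
  μ ∈ convexHull ℝ (⋃ a : A, {ν : S → ℝ | Feasible M s a ν})

def IsForallBisim {S A AP : Type} [Fintype S] [Fintype A] (M : IMDP S A AP)
    (R : S → S → Prop) : Prop :=
  Equivalence R ∧ ∀ s t : S, R s t → M.L s = M.L t ∧
    ∀ μ : S → ℝ, StepTo M s μ →
      ∃ ν : S → ℝ, StepTo M t ν ∧ ∀ c : S, classMass R μ c = classMass R ν c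

def SimForall {S A AP : Type} [Fintype S] [Fintype A] (M : IMDP S A AP)
    (s t : S) : Prop :=
  ∃ R : S → S → Prop, IsForallBisim M R ∧ R s t

inductive Cmp : Type where
  | le : Cmp
  | lt : Cmp
  | ge : Cmp
  | gt : Cmp

def Cmp.eval : Cmp → ℝ → ℝ → Prop
  | Cmp.le, x, y => x ≤ y
  | Cmp.lt, x, y => x < y
  | Cmp.ge, x, y => y ≤ x
  | Cmp.gt, x, y => y < x

mutual
  inductive StateFormula (AP : Type) : Type where
    | tt : StateFormula AP
    | atom : AP → StateFormula AP
    | neg : StateFormula AP → StateFormula AP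
    | conj : StateFormula AP → StateFormula AP → StateFormula AP
    | prob : Cmp → (p : ℚ) → 0 ≤ p → p ≤ 1 → PathFormula AP → StateFormula AP
  inductive PathFormula (AP : Type) : Type where
    | next : StateFormula AP → PathFormula AP
    | untl : StateFormula AP → StateFormula AP → PathFormula AP
    | buntl : ℕ → StateFormula AP → StateFormula AP → PathFormula AP
end

abbrev FinPath (S : Type) : Type := {l : List S // l ≠ []}

structure Scheduler (S A : Type) [Fintype A] : Type where
  f : FinPath S → A → ℝ
  dist : ∀ ω : FinPath S, IsDist (f ω)

structure Nature {S A AP : Type} [Fintype S] [Fintype A] (M : IMDP S A AP) : Type where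
  f : FinPath S → A → S → ℝ
  feasible : ∀ (ω : FinPath S) (a : A), Feasible M (ω.1.getLast ω.2) a (f ω a)

def Cyl {S : Type} (l : List S) : Set (ℕ → S) :=
  {ρ | ∀ i : Fin l.length, ρ (i : ℕ) = l.get i}

def pathSigma (S : Type) : MeasurableSpace (ℕ → S) :=
  MeasurableSpace.generateFrom {C : Set (ℕ → S) | ∃ l : List S, l ≠ [] ∧ C = Cyl l}

def IsPathMeasure {S A AP : Type} [Fintype S] [Fintype A] (M : IMDP S A AP)
    (s : S) (σ : Scheduler S A) (π : Nature M)
    (Pr : @Measure (ℕ → S) (pathSigma S)) : Prop :=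
  IsProbabilityMeasure Pr ∧
  (∀ s' : S, Pr (Cyl [s']) = if s' = s then 1 else 0) ∧
  ∀ (l : List S) (h : l ≠ []) (s' : S),
    Pr (Cyl (l ++ [s'])) = Pr (Cyl l) *
      ENNReal.ofReal (∑ a, σ.f ⟨l, h⟩ a * π.f ⟨l, h⟩ a s')

mutual
  def SatE {S A AP : Type} [Fintype S] [Fintype A] (M : IMDP S A AP)
      (Pr : S → Scheduler S A → Nature M → @Measure (ℕ → S) (pathSigma S)) :
      StateFormula AP → S → Prop
    | StateFormula.tt, _ => True
    | StateFormula.atom x, s => x ∈ M.L s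
    | StateFormula.neg φ, s => ¬ SatE M Pr φ s
    | StateFormula.conj φ₁ φ₂, s => SatE M Pr φ₁ s ∧ SatE M Pr φ₂ s
    | StateFormula.prob c p _ _ ψ, s =>
        ∃ (σ : Scheduler S A) (π : Nature M),
          Cmp.eval c ((Pr s σ π {ρ : ℕ → S | PSatE M Pr ψ ρ}).toReal) (p : ℝ)
  def PSatE {S A AP : Type} [Fintype S] [Fintype A] (M : IMDP S A AP)
      (Pr : S → Scheduler S A → Nature M → @Measure (ℕ → S) (pathSigma S)) :
      PathFormula AP → (ℕ → S) → Prop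
    | PathFormula.next φ, ρ => SatE M Pr φ (ρ 1)
    | PathFormula.untl φ₁ φ₂, ρ => ∃ k : ℕ, ∃ i : ℕ, i < k ∧ SatE M Pr φ₂ (ρ i) ∧
        ∀ j : ℕ, j < i → SatE M Pr φ₁ (ρ j)
    | PathFormula.buntl k φ₁ φ₂, ρ => ∃ i : ℕ, i < k ∧ SatE M Pr φ₂ (ρ i) ∧
        ∀ j : ℕ, j < i → SatE M Pr φ₁ (ρ j)
end

/-!
Fix a bisimulation `R` and a scheduler and nature `(σ, π)` from `s`. We build `(σ', π')` from `t`
under which every event depending only on the sequence of `R`-classes of a finite prefix has the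
same probability. After a history `ω` from `t`, the next state is drawn from a mixture, over the
histories from `s` with the class sequence of `ω` weighted by their probabilities, of their
next-state laws transferred along `R`. This mixture lies in the convex hull of the feasible
distributions at the last state of `ω`, and as every `H_s^a` is convex it is realised by some
scheduler and nature. Induction on the length of histories then shows that the two class-sequence
distributions coincide. A path formula whose state subformulas are `R`-invariant defines such an
event (an increasing union of them for until), so induction on formulas finishes the proof.
-/

theorem exists_sum_smul_of_mem_convexHull_iUnion {𝕜 ι E : Type*} [Field 𝕜] [LinearOrder 𝕜]
    [IsStrictOrderedRing 𝕜] [Fintype ι] [AddCommGroup E] [Module 𝕜 E] {H : ι → Set E}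
    (hH : ∀ i, Convex 𝕜 (H i)) (hne : ∀ i, (H i).Nonempty) {x : E}
    (hx : x ∈ convexHull 𝕜 (⋃ i, H i)) :
    ∃ (w : ι → 𝕜) (y : ι → E), (∀ i, 0 ≤ w i) ∧ ∑ i, w i = 1 ∧ (∀ i, y i ∈ H i) ∧
      ∑ i, w i • y i = x := by
  refine convexHull_min (t := {x | ∃ (w : ι → 𝕜) (y : ι → E), (∀ i, 0 ≤ w i) ∧
    ∑ i, w i = 1 ∧ (∀ i, y i ∈ H i) ∧ ∑ i, w i • y i = x}) ?_ ?_ hx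
  · intro z hz
    obtain ⟨i, hi⟩ := Set.mem_iUnion.1 hz
    refine ⟨Pi.single i 1, Function.update (fun j => (hne j).some) i z, fun j => ?_, by simp,
      fun j => ?_, ?_⟩
    · by_cases h : j = i <;> simp [h]
    · by_cases h : j = i
      · subst h; simpa using hi
      · simpa [h] using (hne j).some_mem
    · simp [Pi.single_apply, Finset.sum_ite_eq']
  · rintro _ ⟨w, y, hw0, hw1, hy, rfl⟩ _ ⟨w', y', hw0', hw1', hy', rfl⟩ a b ha hb hab
    set v : ι → 𝕜 := fun i => a * w i + b * w' i with hv
    have hv0 : ∀ i, 0 ≤ v i := fun i =>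
      add_nonneg (mul_nonneg ha (hw0 i)) (mul_nonneg hb (hw0' i))
    have hsplit : ∀ i, v i = 0 → a * w i = 0 ∧ b * w' i = 0 := fun i h =>
      (add_eq_zero_iff_of_nonneg (mul_nonneg ha (hw0 i)) (mul_nonneg hb (hw0' i))).1 h
    refine ⟨v, fun i => if v i = 0 then y i else
      (a * w i / v i) • y i + (b * w' i / v i) • y' i, hv0, ?_, fun i => ?_, ?_⟩
    · simp only [hv, Finset.sum_add_distrib, ← Finset.mul_sum, hw1, hw1', mul_one, hab]
    · dsimp only
      split_ifs with h
      · exact hy i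
      · refine hH i (hy i) (hy' i) (div_nonneg (mul_nonneg ha (hw0 i)) (hv0 i))
          (div_nonneg (mul_nonneg hb (hw0' i)) (hv0 i)) ?_
        rw [← add_div, div_self h]
    · simp only [Finset.smul_sum, smul_smul, ← Finset.sum_add_distrib]
      refine Finset.sum_congr rfl fun i _ => ?_
      split_ifs with h
      · simp [h, (hsplit i h).1, (hsplit i h).2]
      · rw [smul_add, smul_smul, smul_smul, mul_div_cancel₀ _ h, mul_div_cancel₀ _ h]

lemma List.ofFn_snoc {α : Type*} {n : ℕ} (f : Fin n → α) (x : α) :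
    List.ofFn (Fin.snoc f x : Fin (n + 1) → α) = List.ofFn f ++ [x] := by
  rw [List.ofFn_succ', List.concat_eq_append]
  simp

lemma List.apply_getLast_eq_of_map_eq {α β : Type*} {q : α → β} {l₁ l₂ : List α}
    (h : l₁.map q = l₂.map q) (h₁ : l₁ ≠ []) (h₂ : l₂ ≠ []) :
    q (l₁.getLast h₁) = q (l₂.getLast h₂) := by
  simpa [List.getLast?_map, List.getLast?_eq_some_getLast h₁, List.getLast?_eq_some_getLast h₂]
    using congrArg List.getLast? h

lemma sum_filter_ofFn_congr {S β : Type*} [Fintype S] [AddCommMonoid β] {m m' : ℕ} (h : m = m')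
    (P : List S → Prop) [DecidablePred P] (F : List S → β) :
    ∑ f : Fin m → S with P (List.ofFn f), F (List.ofFn f) =
      ∑ f : Fin m' → S with P (List.ofFn f), F (List.ofFn f) := by
  subst h; rfl

lemma cyl_nil {S : Type} : Cyl ([] : List S) = Set.univ := by
  ext ρ
  simp [Cyl]

section Lumping

variable {S Q : Type} [Fintype S] (q : S → Q)

noncomputable def fiberMass (μ : S → ℝ) (C : Q) : ℝ :=
  ∑ x with q x = C, μ x

lemma fiberMass_smul (c : ℝ) (μ : S → ℝ) (C : Q) :
    fiberMass q (c • μ) C = c * fiberMass q μ C := by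
  simp [fiberMass, Finset.mul_sum]

lemma fiberMass_sum {ι : Type*} (s : Finset ι) (μ : ι → S → ℝ) (C : Q) :
    fiberMass q (∑ i ∈ s, μ i) C = ∑ i ∈ s, fiberMass q (μ i) C := by
  simp only [fiberMass, Finset.sum_apply]
  exact Finset.sum_comm

noncomputable def classWeight (w : List S → ℝ) {n : ℕ} (c : Fin n → Q) : ℝ :=
  ∑ f : Fin n → S with q ∘ f = c, w (List.ofFn f)

lemma sum_filter_comp_eq_snoc {β : Type*} [AddCommMonoid β] {n : ℕ} (c : Fin n → Q) (C : Q)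
    (F : (Fin (n + 1) → S) → β) :
    ∑ f : Fin (n + 1) → S with q ∘ f = Fin.snoc c C, F f =
      ∑ f : Fin n → S with q ∘ f = c, ∑ x with q x = C, F (Fin.snoc f x) := by
  rw [Finset.sum_filter, ← (Fin.snocEquiv fun _ => S).sum_comp, Fintype.sum_prod_type_right]
  change ∑ f : Fin n → S, ∑ x, (if q ∘ Fin.snoc f x = Fin.snoc c C then F (Fin.snoc f x) else 0) = _
  simp only [Fin.comp_snoc, Fin.snoc_inj, ite_and, Finset.sum_filter, Finset.sum_ite_irrel,
    Finset.sum_const_zero]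

variable {q}

lemma classWeight_snoc {w : List S → ℝ} {μ : List S → S → ℝ}
    (hw : ∀ l x, w (l ++ [x]) = w l * μ l x) {n : ℕ} (c : Fin n → Q) (C : Q) :
    classWeight q w (Fin.snoc c C) =
      ∑ f : Fin n → S with q ∘ f = c, w (List.ofFn f) * fiberMass q (μ (List.ofFn f)) C := by
  rw [classWeight, sum_filter_comp_eq_snoc]
  simp only [List.ofFn_snoc, hw, fiberMass, Finset.mul_sum]

lemma eq_zero_of_classWeight_eq_zero {w : List S → ℝ} (hw : ∀ l, 0 ≤ w l) {n : ℕ}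
    {c : Fin n → Q} (h : classWeight q w c = 0) {f : Fin n → S} (hf : q ∘ f = c) :
    w (List.ofFn f) = 0 :=
  (Finset.sum_eq_zero_iff_of_nonneg fun f _ => hw _).1 h f (by simpa using hf)

theorem classWeight_eq_of_step {w₁ w₂ : List S → ℝ} {μ₁ μ₂ : List S → S → ℝ}
    (hw₁ : ∀ l, 0 ≤ w₁ l) (hw₂ : ∀ l, 0 ≤ w₂ l)
    (h₁ : ∀ l x, w₁ (l ++ [x]) = w₁ l * μ₁ l x) (h₂ : ∀ l x, w₂ (l ++ [x]) = w₂ l * μ₂ l x)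
    (hnil : w₁ [] = w₂ [])
    (hstep : ∀ n (g : Fin n → S) C,
      classWeight q w₁ (q ∘ g) * fiberMass q (μ₂ (List.ofFn g)) C =
        ∑ f : Fin n → S with q ∘ f = q ∘ g, w₁ (List.ofFn f) * fiberMass q (μ₁ (List.ofFn f)) C) :
    ∀ n (c : Fin n → Q), classWeight q w₁ c = classWeight q w₂ c := by
  intro n
  induction n with
  | zero => intro c; simp [classWeight, hnil, Subsingleton.elim _ c]
  | succ n ih =>
    intro c
    obtain ⟨c, C, rfl⟩ : ∃ c₀ C, c = Fin.snoc c₀ C :=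
      ⟨Fin.init c, c (Fin.last n), (Fin.snoc_init_self c).symm⟩
    rw [classWeight_snoc h₁, classWeight_snoc h₂]
    set X := ∑ f : Fin n → S with q ∘ f = c, w₁ (List.ofFn f) * fiberMass q (μ₁ (List.ofFn f)) C
    have hX : ∀ g : Fin n → S, q ∘ g = c →
        classWeight q w₁ c * fiberMass q (μ₂ (List.ofFn g)) C = X :=
      fun g hg => by subst hg; exact hstep n g C
    by_cases hZ : classWeight q w₁ c = 0
    · have hZ₂ := (ih c).symm.trans hZ
      rw [Finset.sum_eq_zero fun g hg => by
        rw [eq_zero_of_classWeight_eq_zero hw₂ hZ₂ (Finset.mem_filter.1 hg).2, zero_mul]]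
      exact Finset.sum_eq_zero fun f hf => by
        rw [eq_zero_of_classWeight_eq_zero hw₁ hZ (Finset.mem_filter.1 hf).2, zero_mul]
    · refine mul_left_cancel₀ hZ ?_
      calc classWeight q w₁ c * X = classWeight q w₂ c * X := by rw [ih c]
        _ = ∑ g : Fin n → S with q ∘ g = c, w₂ (List.ofFn g) * X := by
          rw [classWeight, Finset.sum_mul]
        _ = _ := by
          rw [Finset.mul_sum]
          refine Finset.sum_congr rfl fun g hg => ?_
          rw [← hX g (Finset.mem_filter.1 hg).2]
          ring

lemma sum_filter_comp_eq_sum_classWeight [Fintype Q] (w : List S → ℝ) {n : ℕ}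
    (G : (Fin n → Q) → Prop) :
    ∑ f : Fin n → S with G (q ∘ f), w (List.ofFn f) = ∑ c with G c, classWeight q w c := by
  rw [← Finset.sum_fiberwise _ (fun f : Fin n → S => q ∘ f), Finset.sum_filter]
  refine Finset.sum_congr rfl fun c _ => ?_
  rw [classWeight, Finset.filter_filter]
  split_ifs with hc
  · congr 1
    ext f
    simp only [Finset.mem_filter, Finset.mem_univ, true_and, and_iff_right_iff_imp]
    rintro rfl
    exact hc
  · refine Finset.sum_eq_zero fun f hf => absurd ?_ hc
    obtain ⟨hG, rfl⟩ := (Finset.mem_filter.1 hf).2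
    exact hG

end Lumping

section Steps

variable {S A AP : Type} [Fintype S] [Fintype A] (M : IMDP S A AP)

lemma convex_setOf_feasible (s : S) (a : A) : Convex ℝ {μ | Feasible M s a μ} := by
  rintro μ ⟨⟨hμ0, hμ1⟩, hμI⟩ ν ⟨⟨hν0, hν1⟩, hνI⟩ a b ha hb hab
  refine ⟨⟨fun x => convex_Ici (0 : ℝ) (hμ0 x) (hν0 x) ha hb hab, ?_⟩,
    fun x => convex_Icc _ _ (hμI x) (hνI x) ha hb hab⟩
  simp only [Pi.add_apply, Pi.smul_apply, smul_eq_mul, Finset.sum_add_distrib, ← Finset.mul_sum,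
    hμ1, hν1, mul_one, hab]

lemma nonempty_setOf_feasible (s : S) (a : A) : {μ | Feasible M s a μ}.Nonempty :=
  let ⟨μ, h0, h1, hI⟩ := M.feasible_nonempty s a
  ⟨μ, ⟨h0, h1⟩, hI⟩

lemma exists_scheduler_nature_of_stepTo (ν : FinPath S → S → ℝ)
    (hν : ∀ ω, StepTo M (ω.1.getLast ω.2) (ν ω)) :
    ∃ (σ : Scheduler S A) (π : Nature M), ∀ ω x, ∑ a, σ.f ω a * π.f ω a x = ν ω x := by
  have hmix : ∀ ω : FinPath S, ∃ (w : A → ℝ) (y : A → S → ℝ), IsDist w ∧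
      (∀ a, Feasible M (ω.1.getLast ω.2) a (y a)) ∧ ∑ a, w a • y a = ν ω := fun ω => by
    obtain ⟨w, y, hw0, hw1, hy, hsum⟩ := exists_sum_smul_of_mem_convexHull_iUnion
      (convex_setOf_feasible M _) (nonempty_setOf_feasible M _) (hν ω)
    exact ⟨w, y, ⟨hw0, hw1⟩, hy, hsum⟩
  choose w y hw hy hsum using hmix
  exact ⟨⟨w, hw⟩, ⟨y, hy⟩, fun ω x => by simpa [Finset.sum_apply] using congrFun (hsum ω) x⟩

noncomputable def nextLaw (s : S) (σ : Scheduler S A) (π : Nature M) (l : List S) : S → ℝ :=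
  if h : l = [] then fun x => if x = s then 1 else 0
  else fun x => ∑ a, σ.f ⟨l, h⟩ a * π.f ⟨l, h⟩ a x

variable {M}

lemma nextLaw_of_ne_nil (s : S) (σ : Scheduler S A) (π : Nature M) (ω : FinPath S) :
    nextLaw M s σ π ω.1 = ∑ a, σ.f ω a • π.f ω a := by
  ext x
  simp [nextLaw, ω.2, Finset.sum_apply]

lemma stepTo_nextLaw (s : S) (σ : Scheduler S A) (π : Nature M) (ω : FinPath S) :
    StepTo M (ω.1.getLast ω.2) (nextLaw M s σ π ω.1) := by
  rw [nextLaw_of_ne_nil]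
  exact (convex_convexHull ℝ _).sum_mem (fun a _ => (σ.dist ω).1 a) (σ.dist ω).2
    fun a _ => subset_convexHull ℝ _ (Set.mem_iUnion.2 ⟨a, π.feasible ω a⟩)

lemma IsPathMeasure.toReal_cyl_nil {s : S} {σ : Scheduler S A} {π : Nature M}
    {P : @Measure (ℕ → S) (pathSigma S)} (hP : IsPathMeasure M s σ π P) :
    (P (Cyl [])).toReal = 1 := by
  have := hP.1
  rw [cyl_nil, measure_univ, ENNReal.toReal_one]

lemma IsPathMeasure.toReal_cyl_append {s : S} {σ : Scheduler S A} {π : Nature M}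
    {P : @Measure (ℕ → S) (pathSigma S)} (hP : IsPathMeasure M s σ π P) (l : List S) (x : S) :
    (P (Cyl (l ++ [x]))).toReal = (P (Cyl l)).toReal * nextLaw M s σ π l x := by
  by_cases hl : l = []
  · subst hl
    rw [List.nil_append, hP.2.1, hP.toReal_cyl_nil]
    simp [nextLaw, apply_ite ENNReal.toReal]
  · have hnn : 0 ≤ nextLaw M s σ π l x := by
      rw [nextLaw_of_ne_nil s σ π ⟨l, hl⟩, Finset.sum_apply]
      exact Finset.sum_nonneg fun a _ => mul_nonneg ((σ.dist _).1 a) ((π.feasible _ a).1.1 x)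
    rw [hP.2.2 l hl, ENNReal.toReal_mul, ← ENNReal.toReal_ofReal hnn]
    simp [nextLaw, hl]

end Steps

section Transfer

variable {S A AP Q : Type} [Fintype S] [Fintype A] {M : IMDP S A AP} {R : S → S → Prop}

noncomputable def IsForallBisim.transfer (hR : IsForallBisim M R) (y : S) (μ : S → ℝ) :
    S → ℝ :=
  if h : ∃ x, R x y ∧ StepTo M x μ then
    ((hR.2 _ y h.choose_spec.1).2 μ h.choose_spec.2).choose
  else μ

lemma IsForallBisim.transfer_spec (hR : IsForallBisim M R) {x y : S} {μ : S → ℝ}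
    (hxy : R x y) (hμ : StepTo M x μ) :
    StepTo M y (hR.transfer y μ) ∧ ∀ c, classMass R μ c = classMass R (hR.transfer y μ) c := by
  have h : ∃ x, R x y ∧ StepTo M x μ := ⟨x, hxy, hμ⟩
  rw [IsForallBisim.transfer, dif_pos h]
  exact ((hR.2 _ y h.choose_spec.1).2 μ h.choose_spec.2).choose_spec

variable {q : S → Q}

lemma fiberMass_eq_classMass (hq : ∀ x y, q x = q y ↔ R x y) (μ : S → ℝ) (x : S) :
    fiberMass q μ (q x) = classMass R μ x := by
  rw [fiberMass, classMass, Finset.sum_filter]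
  exact Finset.sum_congr rfl fun y _ => if_congr (eq_comm.trans (hq x y)) rfl rfl

lemma fiberMass_eq_of_classMass_eq (hq : ∀ x y, q x = q y ↔ R x y) {μ ν : S → ℝ}
    (h : ∀ c, classMass R μ c = classMass R ν c) (C : Q) :
    fiberMass q μ C = fiberMass q ν C := by
  by_cases hC : ∃ x, q x = C
  · obtain ⟨x, rfl⟩ := hC
    rw [fiberMass_eq_classMass hq, fiberMass_eq_classMass hq, h]
  · have hempty : ∀ μ : S → ℝ, fiberMass q μ C = 0 := fun μ =>
      Finset.sum_eq_zero fun x hx => absurd ⟨x, (Finset.mem_filter.1 hx).2⟩ hC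
    rw [hempty, hempty]

end Transfer

section MatchedLaw

variable {S A AP Q : Type} [Fintype S] [Fintype A] {M : IMDP S A AP} {R : S → S → Prop}
  (hR : IsForallBisim M R) (q : S → Q) (s : S) (σ : Scheduler S A) (π : Nature M)
  (w : List S → ℝ)

-- `Z` is the weight of the class sequence of `ω`; when it vanishes, any law in the hull will do.
noncomputable def matchedLaw (ω : FinPath S) : S → ℝ :=
  let Z := ∑ f : Fin ω.1.length → S with (List.ofFn f).map q = ω.1.map q, w (List.ofFn f)
  if Z = 0 then nextLaw M s σ π ω.1
  else Z⁻¹ • ∑ f : Fin ω.1.length → S with (List.ofFn f).map q = ω.1.map q,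
    w (List.ofFn f) • hR.transfer (ω.1.getLast ω.2) (nextLaw M s σ π (List.ofFn f))

variable {q w}

lemma stepTo_matchedLaw (hq : ∀ x y, q x = q y ↔ R x y) (hw : ∀ l, 0 ≤ w l) (ω : FinPath S) :
    StepTo M (ω.1.getLast ω.2) (matchedLaw hR q s σ π w ω) := by
  simp only [matchedLaw]
  split_ifs with hZ
  · exact stepTo_nextLaw s σ π ω
  · rw [Finset.smul_sum]
    simp only [smul_smul]
    refine (convex_convexHull ℝ _).sum_mem
      (fun f _ => mul_nonneg (inv_nonneg.2 (Finset.sum_nonneg fun _ _ => hw _)) (hw _))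
      (by rw [← Finset.mul_sum, inv_mul_cancel₀ hZ]) fun f hf => ?_
    have hmap := (Finset.mem_filter.1 hf).2
    have hne : List.ofFn f ≠ [] := fun h => ω.2 (by simpa [h] using hmap.symm)
    exact (hR.transfer_spec ((hq _ _).1 (List.apply_getLast_eq_of_map_eq hmap hne ω.2))
      (stepTo_nextLaw s σ π ⟨_, hne⟩)).1

lemma classWeight_mul_fiberMass_matchedLaw (hq : ∀ x y, q x = q y ↔ R x y)
    (hw : ∀ l, 0 ≤ w l) {n : ℕ} (g : Fin n → S) (hg : List.ofFn g ≠ []) (C : Q) :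
    classWeight q w (q ∘ g) * fiberMass q (matchedLaw hR q s σ π w ⟨List.ofFn g, hg⟩) C =
      ∑ f : Fin n → S with q ∘ f = q ∘ g,
        w (List.ofFn f) * fiberMass q (nextLaw M s σ π (List.ofFn f)) C := by
  have hreindex : ∀ {β : Type} [AddCommMonoid β] (F : List S → β),
      ∑ f : Fin (List.ofFn g).length → S with (List.ofFn f).map q = (List.ofFn g).map q,
        F (List.ofFn f) = ∑ f : Fin n → S with q ∘ f = q ∘ g, F (List.ofFn f) := fun F => by
    rw [sum_filter_ofFn_congr List.length_ofFn (fun l => l.map q = (List.ofFn g).map q) F]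
    exact Finset.sum_congr (Finset.filter_congr fun f _ => by simp [List.map_ofFn, List.ofFn_inj])
      fun _ _ => rfl
  simp only [matchedLaw]
  rw [hreindex w,
    hreindex fun l => w l • hR.transfer ((List.ofFn g).getLast hg) (nextLaw M s σ π l)]
  change classWeight q w (q ∘ g) * fiberMass q (if classWeight q w (q ∘ g) = 0 then _
    else (classWeight q w (q ∘ g))⁻¹ • _) C = _
  split_ifs with hZ
  · rw [hZ, zero_mul]
    exact (Finset.sum_eq_zero fun f hf => by
      rw [eq_zero_of_classWeight_eq_zero hw hZ (Finset.mem_filter.1 hf).2, zero_mul]).symm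
  · rw [fiberMass_smul, mul_inv_cancel_left₀ hZ, fiberMass_sum]
    refine Finset.sum_congr rfl fun f hf => ?_
    have hfg : (List.ofFn f).map q = (List.ofFn g).map q := by
      simp [List.map_ofFn, (Finset.mem_filter.1 hf).2]
    have hne : List.ofFn f ≠ [] := fun h => hg (by simpa [h] using hfg.symm)
    rw [fiberMass_smul, ← fiberMass_eq_of_classMass_eq hq (hR.transfer_spec
      ((hq _ _).1 (List.apply_getLast_eq_of_map_eq hfg hne hg)) (stepTo_nextLaw s σ π ⟨_, hne⟩)).2]

end MatchedLaw

section PathMeasure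

variable {S : Type}

lemma mem_cyl_ofFn {n : ℕ} (f : Fin n → S) (ρ : ℕ → S) :
    ρ ∈ Cyl (List.ofFn f) ↔ (fun i : Fin n => ρ i) = f := by
  simp [Cyl, funext_iff, Fin.forall_iff]

lemma measurableSet_cyl (l : List S) : MeasurableSet[pathSigma S] (Cyl l) := by
  by_cases hl : l = []
  · rw [hl, cyl_nil]
    exact @MeasurableSet.univ _ (pathSigma S)
  · exact MeasurableSpace.measurableSet_generateFrom ⟨l, hl, rfl⟩

lemma measure_setOf_eq_sum_cyl [Fintype S] (P : @Measure (ℕ → S) (pathSigma S)) {n : ℕ}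
    (G : (Fin n → S) → Prop) :
    P {ρ | G fun i => ρ i} = ∑ f with G f, P (Cyl (List.ofFn f)) := by
  let := pathSigma S
  have hunion : {ρ : ℕ → S | G fun i => ρ i} = ⋃ f ∈ Finset.univ.filter G, Cyl (List.ofFn f) := by
    ext ρ
    simp [mem_cyl_ofFn]
  rw [hunion, measure_biUnion_finset _ fun f _ => measurableSet_cyl _]
  intro f _ g _ hfg
  refine Set.disjoint_left.2 fun ρ hf hg => hfg ?_
  rw [← (mem_cyl_ofFn f ρ).1 hf, ← (mem_cyl_ofFn g ρ).1 hg]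

lemma toReal_measure_setOf_eq_sum_cyl [Fintype S] (P : @Measure (ℕ → S) (pathSigma S))
    [IsFiniteMeasure P] {n : ℕ} (G : (Fin n → S) → Prop) :
    (P {ρ | G fun i => ρ i}).toReal = ∑ f with G f, (P (Cyl (List.ofFn f))).toReal := by
  rw [measure_setOf_eq_sum_cyl, ENNReal.toReal_sum fun f _ => measure_ne_top _ _]

lemma toReal_measure_classEvent [Fintype S] {Q : Type} [Fintype Q] (q : S → Q)
    (P : @Measure (ℕ → S) (pathSigma S)) [IsFiniteMeasure P] {n : ℕ} (G : (Fin n → Q) → Prop) :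
    (P {ρ | G fun i => q (ρ i)}).toReal =
      ∑ c with G c, classWeight q (fun l => (P (Cyl l)).toReal) c := by
  rw [← sum_filter_comp_eq_sum_classWeight]
  exact toReal_measure_setOf_eq_sum_cyl P fun f => G (q ∘ f)

end PathMeasure

def AgreeOnClassEvents {S Q : Type} (q : S → Q) (μ ν : @Measure (ℕ → S) (pathSigma S)) : Prop :=
  ∀ n (G : (Fin n → Q) → Prop), μ {ρ | G fun i => q (ρ i)} = ν {ρ | G fun i => q (ρ i)}

theorem IsForallBisim.exists_agreeOnClassEvents {S A AP Q : Type} [Fintype S] [Fintype A]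
    [Fintype Q] {M : IMDP S A AP} {R : S → S → Prop} (hR : IsForallBisim M R) {q : S → Q}
    (hq : ∀ x y, q x = q y ↔ R x y)
    {Pr : S → Scheduler S A → Nature M → @Measure (ℕ → S) (pathSigma S)}
    (hPr : ∀ s σ π, IsPathMeasure M s σ π (Pr s σ π)) {s t : S} (hst : R s t)
    (σ : Scheduler S A) (π : Nature M) :
    ∃ (σ' : Scheduler S A) (π' : Nature M), AgreeOnClassEvents q (Pr s σ π) (Pr t σ' π') := by
  set w : List S → ℝ := fun l => (Pr s σ π (Cyl l)).toReal
  obtain ⟨σ', π', hσπ⟩ := exists_scheduler_nature_of_stepTo M (matchedLaw hR q s σ π w)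
    (stepTo_matchedLaw hR s σ π hq fun _ => ENNReal.toReal_nonneg)
  have hlaw : ∀ ω : FinPath S, nextLaw M t σ' π' ω.1 = matchedLaw hR q s σ π w ω :=
    fun ω => by
      rw [nextLaw_of_ne_nil]
      ext x
      simpa [Finset.sum_apply] using hσπ ω x
  have hstep : ∀ n (g : Fin n → S) C, classWeight q w (q ∘ g) *
      fiberMass q (nextLaw M t σ' π' (List.ofFn g)) C = ∑ f : Fin n → S with q ∘ f = q ∘ g,
        w (List.ofFn f) * fiberMass q (nextLaw M s σ π (List.ofFn f)) C := by
    rintro (_ | n) g C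
    · have hqst : q s = q t := (hq s t).2 hst
      simp [classWeight, fiberMass, nextLaw, Subsingleton.elim _ g, hqst]
    · rw [hlaw ⟨_, by simp⟩]
      exact classWeight_mul_fiberMass_matchedLaw hR s σ π hq (fun _ => ENNReal.toReal_nonneg) g _ C
  have hcw := classWeight_eq_of_step (q := q) (w₁ := w)
    (w₂ := fun l => (Pr t σ' π' (Cyl l)).toReal) (fun _ => ENNReal.toReal_nonneg)
    (fun _ => ENNReal.toReal_nonneg) (hPr s σ π).toReal_cyl_append
    (hPr t σ' π').toReal_cyl_append
    ((hPr s σ π).toReal_cyl_nil.trans (hPr t σ' π').toReal_cyl_nil.symm) hstep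
  refine ⟨σ', π', fun n G => ?_⟩
  have := (hPr s σ π).1
  have := (hPr t σ' π').1
  rw [← ENNReal.toReal_eq_toReal_iff' (measure_ne_top _ _) (measure_ne_top _ _),
    toReal_measure_classEvent, toReal_measure_classEvent]
  exact Finset.sum_congr rfl fun c _ => hcw n c

section Satisfaction

variable {S A AP : Type} [Fintype S] [Fintype A] {M : IMDP S A AP}
  {Pr : S → Scheduler S A → Nature M → @Measure (ℕ → S) (pathSigma S)}

lemma psatE_buntl_iff (k : ℕ) (φ₁ φ₂ : StateFormula AP) (ρ : ℕ → S) :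
    PSatE M Pr (PathFormula.buntl k φ₁ φ₂) ρ ↔
      ∃ i : Fin k, SatE M Pr φ₂ (ρ i) ∧ ∀ j : Fin k, j < i → SatE M Pr φ₁ (ρ j) := by
  rw [PSatE]
  constructor
  · rintro ⟨i, hi, h₂, h₁⟩
    exact ⟨⟨i, hi⟩, h₂, fun j hj => h₁ j hj⟩
  · rintro ⟨i, h₂, h₁⟩
    exact ⟨i, i.2, h₂, fun j hj => h₁ ⟨j, hj.trans i.2⟩ hj⟩

lemma setOf_psatE_untl (φ₁ φ₂ : StateFormula AP) :
    {ρ | PSatE M Pr (PathFormula.untl φ₁ φ₂) ρ} =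
      ⋃ k, {ρ | PSatE M Pr (PathFormula.buntl k φ₁ φ₂) ρ} := by
  ext ρ
  simp [PSatE]

lemma monotone_setOf_psatE_buntl (φ₁ φ₂ : StateFormula AP) :
    Monotone fun k => {ρ | PSatE M Pr (PathFormula.buntl k φ₁ φ₂) ρ} := by
  intro k k' hk ρ
  simp only [Set.mem_ofPred_eq, PSatE]
  rintro ⟨i, hi, h⟩
  exact ⟨i, hi.trans_le hk, h⟩

variable {R : S → S → Prop}

def IsForallBisim.setoid (hR : IsForallBisim M R) : Setoid S := ⟨R, hR.1⟩

lemma IsForallBisim.measure_psatE_buntl_eq (hR : IsForallBisim M R) {φ₁ φ₂ : StateFormula AP}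
    (h₁ : ∀ x y, R x y → (SatE M Pr φ₁ x ↔ SatE M Pr φ₁ y))
    (h₂ : ∀ x y, R x y → (SatE M Pr φ₂ x ↔ SatE M Pr φ₂ y))
    {μ ν : @Measure (ℕ → S) (pathSigma S)}
    (hμν : AgreeOnClassEvents (Quotient.mk hR.setoid) μ ν) (k : ℕ) :
    μ {ρ | PSatE M Pr (PathFormula.buntl k φ₁ φ₂) ρ} =
      ν {ρ | PSatE M Pr (PathFormula.buntl k φ₁ φ₂) ρ} := by
  let P₁ := Quotient.lift (s := hR.setoid) (SatE M Pr φ₁) fun x y h => propext (h₁ x y h)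
  let P₂ := Quotient.lift (s := hR.setoid) (SatE M Pr φ₂) fun x y h => propext (h₂ x y h)
  simp only [psatE_buntl_iff]
  exact hμν k fun c => ∃ i, P₂ (c i) ∧ ∀ j, j < i → P₁ (c j)

theorem IsForallBisim.satE_iff (hR : IsForallBisim M R)
    (hPr : ∀ s σ π, IsPathMeasure M s σ π (Pr s σ π)) (φ : StateFormula AP) :
    ∀ x y, R x y → (SatE M Pr φ x ↔ SatE M Pr φ y) := by
  induction φ using StateFormula.rec (motive_2 := fun ψ =>
    ∀ μ ν : @Measure (ℕ → S) (pathSigma S), AgreeOnClassEvents (Quotient.mk hR.setoid) μ ν →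
      μ {ρ | PSatE M Pr ψ ρ} = ν {ρ | PSatE M Pr ψ ρ}) with
  | tt => simp [SatE]
  | atom a => intro x y hxy; rw [SatE, SatE, (hR.2 x y hxy).1]
  | neg φ ih => intro x y hxy; rw [SatE, SatE, ih x y hxy]
  | conj φ₁ φ₂ ih₁ ih₂ => intro x y hxy; rw [SatE, SatE, ih₁ x y hxy, ih₂ x y hxy]
  | prob c p hp₀ hp₁ ψ ih =>
    have hprob : ∀ x y, R x y → SatE M Pr (.prob c p hp₀ hp₁ ψ) x →
        SatE M Pr (.prob c p hp₀ hp₁ ψ) y := by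
      rintro x y hxy ⟨σ, π, hσπ⟩
      obtain ⟨σ', π', hagree⟩ :=
        hR.exists_agreeOnClassEvents (q := Quotient.mk hR.setoid) (fun _ _ => Quotient.eq) hPr hxy
          σ π
      exact ⟨σ', π', ih _ _ hagree ▸ hσπ⟩
    exact fun x y hxy => ⟨hprob x y hxy, hprob y x (hR.1.symm hxy)⟩
  | next φ ih μ ν hμν =>
    exact hμν 2 fun c => Quotient.lift (s := hR.setoid) (SatE M Pr φ)
      (fun x y h => propext (ih x y h)) (c 1)
  | untl φ₁ φ₂ ih₁ ih₂ μ ν hμν =>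
    rw [setOf_psatE_untl, (monotone_setOf_psatE_buntl φ₁ φ₂).measure_iUnion,
      (monotone_setOf_psatE_buntl φ₁ φ₂).measure_iUnion]
    exact iSup_congr (hR.measure_psatE_buntl_eq ih₁ ih₂ hμν)
  | buntl k φ₁ φ₂ ih₁ ih₂ μ ν hμν => exact hR.measure_psatE_buntl_eq ih₁ ih₂ hμν k

end Satisfaction

theorem stmt2 {S A AP : Type} [Fintype S] [Fintype A] (M : IMDP S A AP)
    (Pr : S → Scheduler S A → Nature M → @Measure (ℕ → S) (pathSigma S))
    (hPr : ∀ (s : S) (σ : Scheduler S A) (π : Nature M), IsPathMeasure M s σ π (Pr s σ π))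
    (s t : S) (hst : SimForall M s t) :
    ∀ φ : StateFormula AP, SatE M Pr φ s ↔ SatE M Pr φ t := by
  obtain ⟨R, hR, hRst⟩ := hst
  exact fun φ => hR.satE_iff hPr φ s t hRst
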